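/- Saturation for pure states: For any pure state ψ_ABCD on H_A ⊗ H_B ⊗ H_C ⊗ H_D, T_sq(A;C|B)_ψ = co(QCMI)[ψ_ABCD] = (1/2)·I(A;C|B)_ψ. -/

import Mathlib

open scoped ComplexOrder

/-- A density operator (quantum state): positive semidefinite with unit trace. -/
def IsDensity {d : Type*} [Fintype d] (ρ : Matrix d d ℂ) : Prop :=
  ρ.PosSemidef ∧ ρ.trace = 1

/-- Von Neumann entropy `S(ρ) = −tr(ρ log₂ ρ)`, computed via eigenvalues
(with the convention `0 · log₂ 0 = 0`); junk value `0` on non-Hermitian input. -/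
noncomputable def vnEntropy {d : Type*} [Fintype d] [DecidableEq d]
    (ρ : Matrix d d ℂ) : ℝ := by
  classical exact
    if h : ρ.IsHermitian then -∑ i, (h.eigenvalues i) * Real.logb 2 (h.eigenvalues i) else 0

/-- Quantum conditional mutual information `I(x;z|y)_ρ = S(xy) + S(yz) − S(y) − S(xyz)`
for a state on `x ⊗ y ⊗ z` (conditioning on the middle system `y`). -/
noncomputable def qcmi {x y z : Type*} [Fintype x] [Fintype y] [Fintype z]
    [DecidableEq x] [DecidableEq y] [DecidableEq z]
    (ρ : Matrix (x × y × z) (x × y × z) ℂ) : ℝ :=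
  vnEntropy (Matrix.of fun (p q : x × y) => ∑ c, ρ (p.1, p.2, c) (q.1, q.2, c))
  + vnEntropy (Matrix.of fun (p q : y × z) => ∑ a, ρ (a, p.1, p.2) (a, q.1, q.2))
  - vnEntropy (Matrix.of fun (b b' : y) => ∑ a, ∑ c, ρ (a, b, c) (a, b', c))
  - vnEntropy ρ

/-- For a state `σ` on `A ⊗ B ⊗ C ⊗ D ⊗ E`, the conditional mutual information
`I(A;C|BE)_σ`: the spectator `D` is traced out and `BE` is the conditioning system. -/
noncomputable def qcmiACgivenBE {dA dB dC dD dE : Type*}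
    [Fintype dA] [Fintype dB] [Fintype dC] [Fintype dD] [Fintype dE]
    [DecidableEq dA] [DecidableEq dB] [DecidableEq dC] [DecidableEq dE]
    (σ : Matrix ((dA × dB × dC × dD) × dE) ((dA × dB × dC × dD) × dE) ℂ) : ℝ :=
  qcmi (Matrix.of fun (p q : dA × (dB × dE) × dC) =>
    ∑ d : dD, σ ((p.1, p.2.1.1, p.2.2, d), p.2.1.2) ((q.1, q.2.1.1, q.2.2, d), q.2.1.2))

/-- Hysteretic squashed entanglement `T_sq(A;C|B)_ρ` of a state on `A ⊗ B ⊗ C ⊗ D`: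
half the infimum of `I(A;C|BE)_σ` over all state extensions `σ_ABCDE` of `ρ_ABCD`,
over all finite-dimensional extension systems `E`. -/
noncomputable def Tsq {dA dB dC dD : Type*}
    [Fintype dA] [Fintype dB] [Fintype dC] [Fintype dD]
    [DecidableEq dA] [DecidableEq dB] [DecidableEq dC] [DecidableEq dD]
    (ρ : Matrix (dA × dB × dC × dD) (dA × dB × dC × dD) ℂ) : ℝ :=
  sInf { t : ℝ | ∃ (nE : ℕ)
    (σ : Matrix ((dA × dB × dC × dD) × Fin nE) ((dA × dB × dC × dD) × Fin nE) ℂ),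
    IsDensity σ ∧ (Matrix.of fun p q => ∑ e, σ (p, e) (q, e)) = ρ ∧
    t = (1/2) * qcmiACgivenBE σ }

/-- For a state `σ` on `A ⊗ B ⊗ C ⊗ E`, the conditional mutual information
`I(A;C|BE)_σ` with conditioning system `BE`. -/
noncomputable def qcmi3 {dA dB dC dE : Type*}
    [Fintype dA] [Fintype dB] [Fintype dC] [Fintype dE]
    [DecidableEq dA] [DecidableEq dB] [DecidableEq dC] [DecidableEq dE]
    (σ : Matrix ((dA × dB × dC) × dE) ((dA × dB × dC) × dE) ℂ) : ℝ :=
  qcmi (Matrix.of fun (p q : dA × (dB × dE) × dC) =>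
    σ ((p.1, p.2.1.1, p.2.2), p.2.1.2) ((q.1, q.2.1.1, q.2.2), q.2.1.2))

/-- Squashed quantum non-Markovianity `N_sq(A;C|B)_ρ` of a state on `A ⊗ B ⊗ C`:
half the infimum of `I(A;C|BE)_σ` over all state extensions `σ_ABCE` of `ρ_ABC`. -/
noncomputable def Nsq {dA dB dC : Type*}
    [Fintype dA] [Fintype dB] [Fintype dC]
    [DecidableEq dA] [DecidableEq dB] [DecidableEq dC]
    (ρ : Matrix (dA × dB × dC) (dA × dB × dC) ℂ) : ℝ :=
  sInf { t : ℝ | ∃ (nE : ℕ)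
    (σ : Matrix ((dA × dB × dC) × Fin nE) ((dA × dB × dC) × Fin nE) ℂ),
    IsDensity σ ∧ (Matrix.of fun p q => ∑ e, σ (p, e) (q, e)) = ρ ∧
    t = (1/2) * qcmi3 σ }

/-- Choi matrix of a linear map on matrices. -/
noncomputable def choiMatrix {dX dY : Type*} [Fintype dX] [DecidableEq dX] [Fintype dY]
    (Φ : Matrix dX dX ℂ →ₗ[ℂ] Matrix dY dY ℂ) : Matrix (dX × dY) (dX × dY) ℂ :=
  Matrix.of fun p q => Φ (Matrix.single p.1 q.1 1) p.2 q.2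

/-- A quantum channel: completely positive (equivalently, PSD Choi matrix, by Choi's
theorem) and trace-preserving linear map. -/
def IsQuantumChannel {dX dY : Type*} [Fintype dX] [DecidableEq dX] [Fintype dY]
    (Φ : Matrix dX dX ℂ →ₗ[ℂ] Matrix dY dY ℂ) : Prop :=
  (choiMatrix Φ).PosSemidef ∧ ∀ ρ : Matrix dX dX ℂ, (Φ ρ).trace = ρ.trace

/-- `(Φ ⊗ id)` applied to an operator on `X ⊗ R`. -/
noncomputable def applyLeft {dX dY dR : Type*} [Fintype dX] [DecidableEq dX]
    (Φ : Matrix dX dX ℂ →ₗ[ℂ] Matrix dY dY ℂ)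
    (ρ : Matrix (dX × dR) (dX × dR) ℂ) : Matrix (dY × dR) (dY × dR) ℂ :=
  Matrix.of fun p q => ∑ a, ∑ a',
    Φ (Matrix.single a a' 1) p.1 q.1 * ρ (a, p.2) (a', q.2)

/-- `(id ⊗ Φ)` applied to an operator on `R ⊗ X`. -/
noncomputable def applyRight {dX dY dR : Type*} [Fintype dX] [DecidableEq dX]
    (Φ : Matrix dX dX ℂ →ₗ[ℂ] Matrix dY dY ℂ)
    (ρ : Matrix (dR × dX) (dR × dX) ℂ) : Matrix (dR × dY) (dR × dY) ℂ :=
  Matrix.of fun p q => ∑ x, ∑ x',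
    Φ (Matrix.single x x' 1) p.2 q.2 * ρ (p.1, x) (q.1, x')

/-- The positive semidefinite square root of a positive semidefinite matrix
(the definition Mathlib had under this name in December 2024). -/
noncomputable def Matrix.PosSemidef.sqrt {n 𝕜 : Type*} [Fintype n] [DecidableEq n] [RCLike 𝕜]
    {A : Matrix n n 𝕜} (hA : A.PosSemidef) : Matrix n n 𝕜 :=
  (hA.1.eigenvectorUnitary : Matrix n n 𝕜) *
    Matrix.diagonal (fun i => ((Real.sqrt (hA.1.eigenvalues i) : ℝ) : 𝕜)) *
    (star hA.1.eigenvectorUnitary : Matrix n n 𝕜)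

/-- Trace norm `‖X‖₁ = tr √(XᴴX)`. -/
noncomputable def traceNorm {d : Type*} [Fintype d] [DecidableEq d]
    (X : Matrix d d ℂ) : ℝ :=
  ((Matrix.posSemidef_conjTranspose_mul_self X).sqrt.trace).re

/-- Fidelity `F(ρ,σ) = (tr|√ρ √σ|)²` (junk value `0` off the PSD cone). -/
noncomputable def fidelity {d : Type*} [Fintype d] [DecidableEq d]
    (ρ σ : Matrix d d ℂ) : ℝ := by
  classical exact
    if h : ρ.PosSemidef ∧ σ.PosSemidef then (traceNorm (h.1.sqrt * h.2.sqrt)) ^ 2 else 0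

/-- Binary entropy (base 2), with `h₂(0) = h₂(1) = 0`. -/
noncomputable def binEnt (p : ℝ) : ℝ :=
  -(p * Real.logb 2 p) - (1 - p) * Real.logb 2 (1 - p)

/-- ABC-marginal of the pure state `|v⟩⟨v|` on `A ⊗ B ⊗ C ⊗ D`. -/
noncomputable def pureMargABC {dA dB dC dD : Type*}
    [Fintype dA] [Fintype dB] [Fintype dC] [Fintype dD]
    (v : (dA × dB × dC × dD) → ℂ) : Matrix (dA × dB × dC) (dA × dB × dC) ℂ :=
  Matrix.of fun p q =>
    ∑ d, v (p.1, p.2.1, p.2.2, d) * (starRingEnd ℂ) (v (q.1, q.2.1, q.2.2, d))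

/-- Convex-roof extension of QCMI: `co(QCMI)[ρ_ABCD]` is half the infimum of
`Σ_i p_i I(A;C|B)_{ψ^i}` over finite pure-state ensembles `{p_i, ψ^i}` for `ρ`. -/
noncomputable def coQCMI {dA dB dC dD : Type*}
    [Fintype dA] [Fintype dB] [Fintype dC] [Fintype dD]
    [DecidableEq dA] [DecidableEq dB] [DecidableEq dC] [DecidableEq dD]
    (ρ : Matrix (dA × dB × dC × dD) (dA × dB × dC × dD) ℂ) : ℝ :=
  sInf { t : ℝ | ∃ (k : ℕ) (p : Fin k → ℝ) (v : Fin k → (dA × dB × dC × dD) → ℂ),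
    (∀ i, 0 ≤ p i) ∧ (∑ i, p i) = 1 ∧
    (∀ i, ∑ a, v i a * (starRingEnd ℂ) (v i a) = 1) ∧
    ρ = ∑ i, (p i : ℂ) • Matrix.of (fun a b => v i a * (starRingEnd ℂ) (v i b)) ∧
    t = (1/2) * ∑ i, p i * qcmi (pureMargABC (v i)) }

/-! An extension `σ` of a pure state `ψ = |v⟩⟨v|` carries all of its trace on the range of the
isometry `W = |v⟩ ⊗ 1_E`, and a positive semidefinite matrix with that property satisfies
`σ = W (W† σ W) W†`; hence `σ = ψ ⊗ τ`. Von Neumann entropy is additive on products of states, so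
the `S(τ)` terms cancel among the four entropies of `I(A;C|BE)_{ψ ⊗ τ}`, which therefore equals
`I(A;C|B)_ψ` for every extension. Likewise every vector in a pure-state decomposition of `ψ` is a
phase multiple of `v` (or has weight zero), so every ensemble also gives `I(A;C|B)_ψ`. -/

open Matrix Polynomial
open scoped Kronecker

theorem Real.mul_logb_mul (b x y : ℝ) :
    x * y * Real.logb b (x * y) = y * (x * Real.logb b x) + x * (y * Real.logb b y) := by
  have h := Real.negMulLog_mul x y
  simp only [Real.negMulLog, Real.logb] at h ⊢
  linear_combination (-1 / Real.log b) * h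

theorem Matrix.IsHermitian.kronecker {R n m : Type*} [CommMagma R] [StarMul R] {A : Matrix n n R}
    {B : Matrix m m R} (hA : A.IsHermitian) (hB : B.IsHermitian) : (A ⊗ₖ B).IsHermitian := by
  rw [IsHermitian, conjTranspose_kronecker, hA.eq, hB.eq]

theorem Matrix.IsHermitian.sum_eigenvalues_eq_one {n : Type*} [Fintype n] [DecidableEq n]
    {A : Matrix n n ℂ} (hA : A.IsHermitian) (htr : A.trace = 1) : ∑ i, hA.eigenvalues i = 1 := by
  have h := hA.trace_eq_sum_eigenvalues.symm.trans htr
  simp only [RCLike.ofReal_eq_complex_ofReal] at h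
  exact_mod_cast h

section Entropy

variable {n m : Type*} [Fintype n] [DecidableEq n] [Fintype m]

theorem vnEntropy_eq_of_charpoly_eq {A : Matrix n n ℂ} (hA : A.IsHermitian) (f : m → ℝ)
    (h : A.charpoly = ∏ j, (X - C (f j : ℂ))) :
    vnEntropy A = -∑ j, f j * Real.logb 2 (f j) := by
  have hspec : Multiset.map hA.eigenvalues Finset.univ.val = Multiset.map f Finset.univ.val := by
    apply Multiset.map_injective Complex.ofReal_injective
    have hroots := hA.roots_charpoly_eq_eigenvalues
    rw [h, Polynomial.roots_prod _ _ (by simp [Finset.prod_ne_zero_iff, X_sub_C_ne_zero])]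
      at hroots
    simpa [Multiset.map_map, Function.comp_def] using hroots.symm
  rw [vnEntropy, dif_pos hA]
  simpa [Multiset.map_map, Function.comp_def] using
    congrArg (fun s => -(s.map fun x => x * Real.logb 2 x).sum) hspec

theorem vnEntropy_submatrix_equiv [DecidableEq m] {A : Matrix n n ℂ} (hA : A.IsHermitian)
    (e : m ≃ n) : vnEntropy (A.submatrix e e) = vnEntropy A := by
  have hcp : (A.submatrix e e).charpoly = A.charpoly := charpoly_reindex e.symm A
  rw [vnEntropy_eq_of_charpoly_eq (hA.submatrix e) hA.eigenvalues (hcp.trans hA.charpoly_eq),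
    vnEntropy_eq_of_charpoly_eq hA hA.eigenvalues hA.charpoly_eq]

theorem Matrix.IsHermitian.charpoly_kronecker [DecidableEq m] {A : Matrix n n ℂ} {B : Matrix m m ℂ}
    (hA : A.IsHermitian) (hB : B.IsHermitian) :
    (A ⊗ₖ B).charpoly =
      ∏ p : n × m, (X - C ((hA.eigenvalues p.1 * hB.eigenvalues p.2 : ℝ) : ℂ)) := by
  set U : Matrix n n ℂ := (hA.eigenvectorUnitary : Matrix n n ℂ)
  set V : Matrix m m ℂ := (hB.eigenvectorUnitary : Matrix m m ℂ)
  have hUV : (star U ⊗ₖ star V) * (U ⊗ₖ V) = 1 := by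
    rw [← mul_kronecker_mul, Unitary.coe_star_mul_self, Unitary.coe_star_mul_self,
      one_kronecker_one]
  conv_lhs => rw [hA.spectral_theorem, hB.spectral_theorem, Unitary.conjStarAlgAut_apply,
    Unitary.conjStarAlgAut_apply, mul_kronecker_mul, mul_kronecker_mul, charpoly_mul_comm,
    ← mul_assoc, hUV, one_mul, diagonal_kronecker_diagonal, charpoly_diagonal]
  simp

end Entropy

theorem vnEntropy_kronecker {n m : Type*} [Fintype n] [DecidableEq n] [Fintype m] [DecidableEq m]
    {A : Matrix n n ℂ} {B : Matrix m m ℂ} (hA : A.IsHermitian) (hB : B.IsHermitian)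
    (htrA : A.trace = 1) (htrB : B.trace = 1) :
    vnEntropy (A ⊗ₖ B) = vnEntropy A + vnEntropy B := by
  rw [vnEntropy_eq_of_charpoly_eq (hA.kronecker hB) _ (hA.charpoly_kronecker hB),
    vnEntropy_eq_of_charpoly_eq hA hA.eigenvalues hA.charpoly_eq,
    vnEntropy_eq_of_charpoly_eq hB hB.eigenvalues hB.charpoly_eq,
    Fintype.sum_prod_type]
  simp only [Real.mul_logb_mul, Finset.sum_add_distrib, ← Finset.sum_mul, ← Finset.mul_sum,
    hA.sum_eigenvalues_eq_one htrA, hB.sum_eigenvalues_eq_one htrB]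
  ring

theorem vnEntropy_submatrix_kronecker {n m l : Type*} [Fintype n] [DecidableEq n] [Fintype m]
    [DecidableEq m] [Fintype l] [DecidableEq l] {A : Matrix n n ℂ} {B : Matrix m m ℂ}
    (hA : A.IsHermitian) (hB : B.IsHermitian) (htrA : A.trace = 1) (htrB : B.trace = 1)
    (g : l ≃ n × m) :
    vnEntropy ((A ⊗ₖ B).submatrix g g) = vnEntropy A + vnEntropy B := by
  rw [vnEntropy_submatrix_equiv (hA.kronecker hB), vnEntropy_kronecker hA hB htrA htrB]

section PartialTrace

variable {R n α κ : Type*} [Fintype κ]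

theorem Matrix.IsHermitian.partialTrace [AddCommMonoid R] [StarAddMonoid R] {M : Matrix n n R}
    (hM : M.IsHermitian) (f : α → κ → n) :
    (Matrix.of fun p q => ∑ k, M (f p k) (f q k)).IsHermitian := by
  ext p q
  simp only [conjTranspose_apply, of_apply, star_sum]
  exact Finset.sum_congr rfl fun k _ => hM.apply _ _

theorem Matrix.trace_partialTrace [AddCommMonoid R] [Fintype α] [Fintype n] (M : Matrix n n R)
    (e : α × κ ≃ n) :
    (Matrix.of fun p q => ∑ k, M (e (p, k)) (e (q, k))).trace = M.trace := by
  simp only [trace, diag, of_apply, ← Fintype.sum_prod_type']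
  exact e.sum_comp fun i => M i i

end PartialTrace

theorem Matrix.trace_mul_kronecker_one {R I E : Type*} [CommSemiring R] [Fintype I] [Fintype E]
    [DecidableEq E] (σ : Matrix (I × E) (I × E) R) (A : Matrix I I R) :
    (σ * (A ⊗ₖ 1)).trace = ((Matrix.of fun p q => ∑ e, σ (p, e) (q, e)) * A).trace := by
  simp only [trace, diag, mul_apply, kroneckerMap_apply, one_apply, mul_ite, mul_zero, mul_one,
    Fintype.sum_prod_type, Finset.sum_ite_eq', Finset.mem_univ, if_true, of_apply, Finset.sum_mul]
  exact Finset.sum_congr rfl fun _ _ => Finset.sum_comm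

def Equiv.prodMiddleProdAssoc {x y z e : Type*} : x × (y × e) × z ≃ (x × y × z) × e where
  toFun p := ((p.1, p.2.1.1, p.2.2), p.2.1.2)
  invFun q := (q.1.1, (q.1.2.1, q.2), q.1.2.2)

section Conditioning

variable {x y z e : Type*} [Fintype x] [Fintype y] [Fintype z] [Fintype e]
  [DecidableEq x] [DecidableEq y] [DecidableEq z] [DecidableEq e]

theorem qcmi_kronecker_middle {M : Matrix (x × y × z) (x × y × z) ℂ} {τ : Matrix e e ℂ}
    (hM : M.IsHermitian) (hτ : τ.IsHermitian) (htrM : M.trace = 1) (htrτ : τ.trace = 1) :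
    qcmi ((M ⊗ₖ τ).submatrix Equiv.prodMiddleProdAssoc Equiv.prodMiddleProdAssoc) = qcmi M := by
  set F := (M ⊗ₖ τ).submatrix Equiv.prodMiddleProdAssoc Equiv.prodMiddleProdAssoc
  set MAB : Matrix (x × y) (x × y) ℂ := Matrix.of fun p q => ∑ c, M (p.1, p.2, c) (q.1, q.2, c)
  set MBC : Matrix (y × z) (y × z) ℂ := Matrix.of fun p q => ∑ a, M (a, p.1, p.2) (a, q.1, q.2)
  set MB : Matrix y y ℂ := Matrix.of fun b b' => ∑ a, MAB (a, b) (a, b')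
  have hMAB : MAB.IsHermitian := hM.partialTrace fun (p : x × y) (c : z) => (p.1, p.2, c)
  have hMBC : MBC.IsHermitian := hM.partialTrace fun (p : y × z) (a : x) => (a, p.1, p.2)
  have hMB : MB.IsHermitian := hMAB.partialTrace fun (b : y) (a : x) => (a, b)
  have htrMAB : MAB.trace = 1 := (M.trace_partialTrace (Equiv.prodAssoc x y z)).trans htrM
  have htrMBC : MBC.trace = 1 := (M.trace_partialTrace (Equiv.prodComm _ _)).trans htrM
  have htrMB : MB.trace = 1 := (MAB.trace_partialTrace (Equiv.prodComm _ _)).trans htrMAB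
  let gAB : x × (y × e) ≃ (x × y) × e := (Equiv.prodAssoc x y e).symm
  let gBC : (y × e) × z ≃ (y × z) × e :=
    ⟨fun p => ((p.1.1, p.2), p.1.2), fun q => ((q.1.1, q.2), q.1.2), fun _ => rfl, fun _ => rfl⟩
  have hAB : (Matrix.of fun (p q : x × (y × e)) => ∑ c, F (p.1, p.2, c) (q.1, q.2, c)) =
      (MAB ⊗ₖ τ).submatrix gAB gAB := by
    ext p q; simp [F, MAB, gAB, Equiv.prodMiddleProdAssoc, Finset.sum_mul]
  have hBC : (Matrix.of fun (p q : (y × e) × z) => ∑ a, F (a, p.1, p.2) (a, q.1, q.2)) =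
      (MBC ⊗ₖ τ).submatrix gBC gBC := by
    ext p q; simp [F, MBC, gBC, Equiv.prodMiddleProdAssoc, Finset.sum_mul]
  have hB : (Matrix.of fun (p q : y × e) => ∑ a, ∑ c, F (a, p, c) (a, q, c)) = MB ⊗ₖ τ := by
    ext p q; simp [F, MB, MAB, Equiv.prodMiddleProdAssoc, Finset.sum_mul]
  rw [qcmi, qcmi, hAB, hBC, hB, vnEntropy_submatrix_kronecker hMAB hτ htrMAB htrτ,
    vnEntropy_submatrix_kronecker hMBC hτ htrMBC htrτ, vnEntropy_kronecker hMB hτ htrMB htrτ,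
    vnEntropy_submatrix_kronecker hM hτ htrM htrτ]
  simp only [MB, MAB, MBC, of_apply]
  ring

end Conditioning

theorem qcmiACgivenBE_kronecker {dA dB dC dD dE : Type*} [Fintype dA] [Fintype dB] [Fintype dC]
    [Fintype dD] [Fintype dE] [DecidableEq dA] [DecidableEq dB] [DecidableEq dC] [DecidableEq dE]
    {ρ : Matrix (dA × dB × dC × dD) (dA × dB × dC × dD) ℂ} {τ : Matrix dE dE ℂ}
    (hρ : ρ.IsHermitian) (hτ : τ.IsHermitian) (htrρ : ρ.trace = 1) (htrτ : τ.trace = 1) :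
    qcmiACgivenBE (ρ ⊗ₖ τ) = qcmi (Matrix.of fun p q : dA × dB × dC =>
      ∑ d, ρ (p.1, p.2.1, p.2.2, d) (q.1, q.2.1, q.2.2, d)) := by
  have hM := hρ.partialTrace fun (p : dA × dB × dC) (d : dD) => (p.1, p.2.1, p.2.2, d)
  have htrM := ρ.trace_partialTrace ((Equiv.prodAssoc _ _ _).trans
    (Equiv.prodCongr (Equiv.refl dA) (Equiv.prodAssoc dB dC dD)))
  rw [← qcmi_kronecker_middle hM hτ (htrM.trans htrρ) htrτ, qcmiACgivenBE]
  congr 1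
  ext p q
  simp [Equiv.prodMiddleProdAssoc, Finset.sum_mul]

theorem Matrix.PosSemidef.mul_eq_zero_of_conjTranspose_mul_mul_eq_zero {𝕜 n : Type*} [RCLike 𝕜]
    [Fintype n] [DecidableEq n] {σ Q : Matrix n n 𝕜} (hσ : σ.PosSemidef) (h : Qᴴ * σ * Q = 0) : σ * Q = 0 := by
  refine ext_of_mulVec_single fun i => ?_
  rw [zero_mulVec, ← mulVec_mulVec, ← hσ.dotProduct_mulVec_zero_iff]
  have hquad := dotProduct_mulVec (star (Pi.single i 1)) (Qᴴ * σ * Q) (Pi.single i 1)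
  simpa only [star_mulVec, dotProduct_mulVec, vecMul_vecMul, h, zero_mulVec, dotProduct_zero]
    using hquad.symm

theorem Matrix.PosSemidef.eq_mul_mul_conjTranspose_of_trace_eq {𝕜 n m : Type*} [RCLike 𝕜]
    [Fintype n] [DecidableEq n] [Fintype m] [DecidableEq m] {σ : Matrix n n 𝕜} (hσ : σ.PosSemidef)
    {W : Matrix n m 𝕜} (hW : Wᴴ * W = 1) (htr : (Wᴴ * σ * W).trace = σ.trace) :
    σ = W * (Wᴴ * σ * W) * Wᴴ := by
  have hP : W * Wᴴ * (W * Wᴴ) = W * Wᴴ := by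
    rw [Matrix.mul_assoc, ← Matrix.mul_assoc Wᴴ, hW, Matrix.one_mul]
  set Q : Matrix n n 𝕜 := 1 - W * Wᴴ
  have hQH : Qᴴ = Q := by simp [Q, conjTranspose_sub]
  have hQQ : Q * Q = Q := by
    simp only [Q, sub_mul, mul_sub, one_mul, mul_one, hP]
    abel
  have htrQ : (Qᴴ * σ * Q).trace = 0 := by
    rw [hQH, trace_mul_cycle, hQQ, trace_mul_comm]
    simp only [Q, mul_sub, mul_one, trace_sub]
    rw [← Matrix.mul_assoc, trace_mul_comm, ← Matrix.mul_assoc, htr, sub_self]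
  have hσQ : σ * Q = 0 :=
    hσ.mul_eq_zero_of_conjTranspose_mul_mul_eq_zero
      ((hσ.conjTranspose_mul_mul_same Q).trace_eq_zero_iff.mp htrQ)
  have hright : σ * (W * Wᴴ) = σ := by
    rw [eq_comm, ← sub_eq_zero, ← mul_one_sub]; exact hσQ
  have hleft : W * Wᴴ * σ = σ := by
    simpa [conjTranspose_mul, hσ.1.eq, Matrix.mul_assoc] using congrArg (fun M => Mᴴ) hright
  calc σ = W * Wᴴ * (σ * (W * Wᴴ)) := by rw [hright, hleft]
    _ = W * (Wᴴ * σ * W) * Wᴴ := by simp only [Matrix.mul_assoc]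

section PureMarginal

variable {I : Type*} [Fintype I] {v : I → ℂ}

theorem trace_vecMulVec_star (hv : v ⬝ᵥ star v = 1) : (vecMulVec v (star v)).trace = 1 := by
  rw [trace_vecMulVec, hv]

theorem vecMulVec_star_mul_self (hv : v ⬝ᵥ star v = 1) :
    vecMulVec v (star v) * vecMulVec v (star v) = vecMulVec v (star v) := by
  rw [vecMulVec_mul_vecMulVec, dotProduct_comm, hv, one_smul]

theorem exists_eq_kronecker_of_partialTrace_eq_vecMulVec {E : Type*} [Fintype E] [DecidableEq I]
    [DecidableEq E] (hv : v ⬝ᵥ star v = 1)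
    {σ : Matrix (I × E) (I × E) ℂ} (hσ : σ.PosSemidef)
    (hmarg : (Matrix.of fun p q => ∑ e, σ (p, e) (q, e)) = vecMulVec v (star v)) :
    ∃ τ : Matrix E E ℂ, τ.PosSemidef ∧ τ.trace = 1 ∧ σ = vecMulVec v (star v) ⊗ₖ τ := by
  let W : Matrix (I × E) E ℂ := Matrix.of fun r f => v r.1 * (1 : Matrix E E ℂ) r.2 f
  have hconj : ∀ τ : Matrix E E ℂ, W * τ * Wᴴ = vecMulVec v (star v) ⊗ₖ τ := by
    intro τ
    ext ⟨p, e⟩ ⟨q, f⟩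
    simp [W, mul_apply, one_apply, vecMulVec_apply, apply_ite (starRingEnd ℂ)]
    ring
  have hW : Wᴴ * W = 1 := by
    ext e f
    by_cases h : e = f
    · subst h
      simpa [W, mul_apply, one_apply, Fintype.sum_prod_type, dotProduct, mul_comm] using hv
    · simp [W, mul_apply, one_apply, Fintype.sum_prod_type, h, Ne.symm h]
  have htrσ : σ.trace = 1 := by
    rw [← σ.trace_partialTrace (Equiv.refl _)]
    exact (congrArg trace hmarg).trans (trace_vecMulVec_star hv)
  have htr : (Wᴴ * σ * W).trace = 1 := by
    have hP : W * Wᴴ = vecMulVec v (star v) ⊗ₖ 1 := by simpa using hconj 1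
    rw [Matrix.mul_assoc, trace_mul_comm, Matrix.mul_assoc, hP, trace_mul_kronecker_one, hmarg,
      vecMulVec_star_mul_self hv, trace_vecMulVec_star hv]
  refine ⟨Wᴴ * σ * W, hσ.conjTranspose_mul_mul_same W, htr, ?_⟩
  rw [← hconj]
  exact hσ.eq_mul_mul_conjTranspose_of_trace_eq hW (htr.trans htrσ.symm)

end PureMarginal

section Ensemble

variable {I : Type*} [Fintype I] {v : I → ℂ}

theorem star_dotProduct_vecMulVec_star_mulVec (w x : I → ℂ) :
    star x ⬝ᵥ (vecMulVec w (star w) *ᵥ x) = star (star w ⬝ᵥ x) * (star w ⬝ᵥ x) := by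
  rw [vecMulVec_mulVec, dotProduct_comm, op_smul_eq_smul, smul_dotProduct, smul_eq_mul, mul_comm,
    ← star_dotProduct_star, star_star, dotProduct_comm]

theorem exists_eq_smul_of_vecMulVec_eq_sum {k : Type*} [Fintype k] (hv : v ⬝ᵥ star v = 1)
    {p : k → ℝ} {w : k → I → ℂ} (hp : ∀ j, 0 ≤ p j)
    (hdec : vecMulVec v (star v) = ∑ j, (p j : ℂ) • vecMulVec (w j) (star (w j)))
    {i : k} (hpi : p i ≠ 0) : ∃ c : ℂ, w i = c • v := by
  set c := star v ⬝ᵥ w i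
  set u := w i - c • v
  have hvu : star v ⬝ᵥ u = 0 := by
    simp [u, c, dotProduct_sub, dotProduct_smul, dotProduct_comm (star v) v, hv]
  have hsum : ∑ j, (p j : ℂ) • (star u ⬝ᵥ (vecMulVec (w j) (star (w j)) *ᵥ u)) = 0 := by
    have h0 : star u ⬝ᵥ (vecMulVec v (star v) *ᵥ u) = 0 := by
      rw [star_dotProduct_vecMulVec_star_mulVec, hvu, mul_zero]
    rw [hdec, sum_mulVec, dotProduct_sum] at h0
    simpa only [smul_mulVec, dotProduct_smul] using h0
  have hwu : star (w i) ⬝ᵥ u = 0 := by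
    have hterm := (Finset.sum_eq_zero_iff_of_nonneg fun j _ => smul_nonneg (by exact_mod_cast hp j)
      ((posSemidef_vecMulVec_self_star (w j)).dotProduct_mulVec_nonneg u)).mp hsum i
      (Finset.mem_univ i)
    rw [smul_eq_zero, star_dotProduct_vecMulVec_star_mulVec,
      CStarRing.star_mul_self_eq_zero_iff] at hterm
    exact hterm.resolve_left (by exact_mod_cast hpi)
  refine ⟨c, sub_eq_zero.mp (dotProduct_star_self_eq_zero.mp ?_)⟩
  have hu : star u = star (w i) - star c • star v := by simp [u, star_sub]
  rw [hu, sub_dotProduct, smul_dotProduct, hwu, hvu, smul_zero, sub_zero]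

end Ensemble

theorem pureMargABC_smul {dA dB dC dD : Type*} [Fintype dA] [Fintype dB] [Fintype dC] [Fintype dD]
    (c : ℂ) (v : dA × dB × dC × dD → ℂ) :
    pureMargABC (c • v) = (c * star c) • pureMargABC v := by
  ext p q
  simp only [pureMargABC, of_apply, Matrix.smul_apply, Pi.smul_apply, smul_eq_mul, map_mul,
    starRingEnd_apply, Finset.mul_sum]
  exact Finset.sum_congr rfl fun _ _ => by ring

theorem csInf_eq_of_forall_eq {α : Type*} [ConditionallyCompleteLattice α] {s : Set α} {a : α}
    (hne : s.Nonempty) (h : ∀ t ∈ s, t = a) : sInf s = a := by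
  rw [Set.eq_singleton_iff_nonempty_unique_mem.mpr ⟨hne, h⟩, csInf_singleton]

section PureState

variable {dA dB dC dD : Type*} [Fintype dA] [Fintype dB] [Fintype dC] [Fintype dD]
  [DecidableEq dA] [DecidableEq dB] [DecidableEq dC] [DecidableEq dD] {v : dA × dB × dC × dD → ℂ}

theorem Tsq_vecMulVec_star (hv : v ⬝ᵥ star v = 1) :
    Tsq (vecMulVec v (star v)) = (1/2) * qcmi (pureMargABC v) := by
  have hψ := posSemidef_vecMulVec_self_star v
  have htrψ := trace_vecMulVec_star hv
  refine csInf_eq_of_forall_eq ?_ ?_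
  · refine ⟨_, 1, vecMulVec v (star v) ⊗ₖ 1, ⟨hψ.kronecker PosSemidef.one, ?_⟩, ?_, rfl⟩
    · rw [trace_kronecker, htrψ, trace_one]; simp
    · ext p q; simp
  · rintro t ⟨nE, σ, ⟨hσ, -⟩, hmarg, rfl⟩
    obtain ⟨τ, hτ, htrτ, rfl⟩ := exists_eq_kronecker_of_partialTrace_eq_vecMulVec hv hσ hmarg
    rw [qcmiACgivenBE_kronecker hψ.isHermitian hτ.isHermitian htrψ htrτ]
    rfl

theorem coQCMI_vecMulVec_star (hv : v ⬝ᵥ star v = 1) :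
    coQCMI (vecMulVec v (star v)) = (1/2) * qcmi (pureMargABC v) := by
  refine csInf_eq_of_forall_eq ?_ ?_
  · exact ⟨_, 1, fun _ => 1, fun _ => v, fun _ => zero_le_one, by simp, fun _ => hv,
      by ext; simp [vecMulVec_apply], rfl⟩
  · rintro t ⟨k, p, w, hp, hp1, hw, hdec, rfl⟩
    have hterm : ∀ j, p j * qcmi (pureMargABC (w j)) = p j * qcmi (pureMargABC v) := by
      intro j
      rcases eq_or_ne (p j) 0 with hpj | hpj
      · simp [hpj]
      obtain ⟨c, hc⟩ := exists_eq_smul_of_vecMulVec_eq_sum hv hp hdec hpj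
      have hnorm : (c • v) ⬝ᵥ star (c • v) = 1 := hc ▸ hw j
      rw [star_smul, smul_dotProduct, dotProduct_smul, hv, smul_eq_mul, smul_eq_mul, mul_one]
        at hnorm
      rw [hc, pureMargABC_smul, hnorm, one_smul]
    rw [Finset.sum_congr rfl fun j _ => hterm j, ← Finset.sum_mul, hp1, one_mul]

end PureState

/-- **Saturation for pure states:** for a pure state `ψ = |v⟩⟨v|` on `A⊗B⊗C⊗D`,
`T_sq(A;C|B)_ψ = co(QCMI)[ψ] = (1/2) I(A;C|B)_ψ`. -/
theorem Tsq_pure_saturation {dA dB dC dD : Type*}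
    [Fintype dA] [Fintype dB] [Fintype dC] [Fintype dD]
    [DecidableEq dA] [DecidableEq dB] [DecidableEq dC] [DecidableEq dD]
    (v : (dA × dB × dC × dD) → ℂ)
    (hv : ∑ a, v a * (starRingEnd ℂ) (v a) = 1)
    (ψ : Matrix (dA × dB × dC × dD) (dA × dB × dC × dD) ℂ)
    (hψ : ψ = Matrix.of fun a b => v a * (starRingEnd ℂ) (v b)) :
    Tsq ψ = coQCMI ψ ∧ coQCMI ψ = (1/2) * qcmi (pureMargABC v) := by
  obtain rfl : ψ = vecMulVec v (star v) := hψ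
  exact ⟨(Tsq_vecMulVec_star hv).trans (coQCMI_vecMulVec_star hv).symm, coQCMI_vecMulVec_star hv⟩
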